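/- Let T and G be graphs, let f₁, …, f_a be graph homomorphisms from T to G that are pairwise adjacent in the exponential graph G^T (i.e., for all i,j and all adjacent t ∼ t' in T, f_i(t) ∼ f_j(t') in G). If T is finite, connected, has at least one edge, and has diameter d, then the subgraph G_α of G induced by all vertices {f_i(t) : 1 ≤ i ≤ a, t ∈ V(T)} has diameter at most max{2, d}. -/

import Mathlib

structure UGraph (V : Type) where
  Adj : V → V → Prop
  symm : ∀ v w, Adj v w → Adj w v

def IsHom {V W : Type} (G : UGraph V) (H : UGraph W) (f : V → W) : Prop :=
  ∀ a b, G.Adj a b → H.Adj (f a) (f b)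

def ExpAdj {VT VG : Type} (T : UGraph VT) (G : UGraph VG) (f g : VT → VG) : Prop :=
  ∀ t t', T.Adj t t' → G.Adj (f t) (g t')

def expGraph {VT VG : Type} (T : UGraph VT) (G : UGraph VG) : UGraph (VT → VG) :=
  ⟨fun f g => ExpAdj T G f g, fun _ _ h t t' htt => G.symm _ _ (h t' t (T.symm _ _ htt))⟩

def prodG {VA VB : Type} (A : UGraph VA) (B : UGraph VB) : UGraph (VA × VB) :=
  ⟨fun p q => A.Adj p.1 q.1 ∧ B.Adj p.2 q.2,
   fun _ _ h => ⟨A.symm _ _ h.1, B.symm _ _ h.2⟩⟩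

inductive Dismantles {V : Type} [DecidableEq V] (G : UGraph V) : Finset V → Prop
  | single (v : V) (hv : G.Adj v v) : Dismantles G {v}
  | fold (s : Finset V) (v w : V) (hv : v ∈ s) (hw : w ∈ s) (hvw : v ≠ w)
      (hN : ∀ u ∈ s, G.Adj v u → G.Adj w u)
      (hrest : Dismantles G (s.erase v)) : Dismantles G s

def Dismantlable {V : Type} [DecidableEq V] (G : UGraph V) : Prop :=
  ∃ s : Finset V, (∀ v, v ∈ s) ∧ Dismantles G s

inductive WalkLen {V : Type} (A : V → V → Prop) : ℕ → V → V → Prop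
  | zero (v : V) : WalkLen A 0 v v
  | succ {n : ℕ} {u v w : V} (h : A u v) (hw : WalkLen A n v w) : WalkLen A (n+1) u w

theorem stmt1 {VT VG : Type} [Fintype VT] (T : UGraph VT) (G : UGraph VG)
    {ι : Type} [Nonempty ι] (f : ι → VT → VG) (d : ℕ)
    (hedge : ∃ t t', T.Adj t t')
    (hdiam : ∀ t t' : VT, ∃ n ≤ d, WalkLen T.Adj n t t')
    (hhom : ∀ i, IsHom T G (f i))
    (hadj : ∀ i j, ExpAdj T G (f i) (f j)) :
    ∀ v ∈ {v : VG | ∃ i t, f i t = v}, ∀ w ∈ {v : VG | ∃ i t, f i t = v},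
      ∃ n ≤ max 2 d,
        WalkLen (fun a b => G.Adj a b ∧ a ∈ {v : VG | ∃ i t, f i t = v}
          ∧ b ∈ {v : VG | ∃ i t, f i t = v}) n v w := by
  classical
  rintro v ⟨i, t, rfl⟩ w ⟨j, t', rfl⟩
  set S : Set VG := {v : VG | ∃ i t, f i t = v} with hS
  have hmem : ∀ (k : ι) (s : VT), f k s ∈ S := fun k s => ⟨k, s, rfl⟩
  have homWalk : ∀ (k : ι) (n : ℕ) (a b : VT), WalkLen T.Adj n a b →
      WalkLen (fun a b => G.Adj a b ∧ a ∈ S ∧ b ∈ S) n (f k a) (f k b) := by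
    intro k n a b hw
    induction hw with
    | zero v => exact WalkLen.zero _
    | succ h _ ih => exact WalkLen.succ ⟨hhom k _ _ h, hmem k _, hmem k _⟩ ih
  obtain ⟨n, hn, hw⟩ := hdiam t t'
  cases hw with
  | zero v =>
    -- t = t'; find a neighbor of t
    obtain ⟨t₀, t₀', he⟩ := hedge
    obtain ⟨m, _, hwm⟩ := hdiam t t₀
    have hnb : ∃ s, T.Adj t s := by
      cases hwm with
      | zero _ => exact ⟨t₀', he⟩
      | succ h _ => exact ⟨_, h⟩
    obtain ⟨s, hs⟩ := hnb
    refine ⟨2, le_max_left _ _, ?_⟩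
    exact WalkLen.succ ⟨hadj i j t s hs, hmem i t, hmem j s⟩
      (WalkLen.succ ⟨hadj j j s t (T.symm _ _ hs), hmem j s, hmem j t⟩ (WalkLen.zero _))
  | succ h hw' =>
    refine ⟨_, le_trans hn (le_max_right _ _), ?_⟩
    exact WalkLen.succ ⟨hadj i j _ _ h, hmem i _, hmem j _⟩ (homWalk j _ _ _ hw')
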